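/- (Fundamental Inequality I) For every k ≥ 1, every x ∈ ℝ^{m×d} and every y ∈ C^⊥, the iterates of the accelerated primal-dual recursion satisfy: Φ(u^{k+1}, y) − Φ(Ax, y) + h(u^{k+1/2}) − h(x) ≤ −⟨y^{k+1} − y, u^{k+1} − Ax⟩ − (θ_k/γ) ⟨(I − (γτ/θ_k²)B)(x̂^{k+1} − x̂^k), u^{k+1} − Ax⟩ + (L_f/2) ‖u^{k+1} − x^k‖². -/

import Mathlib

/-!
Put `w = u^{k+1/2}`, so that `∇f(x^k) = (x^k - w)/γ - ŷ^k`, and `M = A - A²`, which is positive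
semidefinite when `0 ⪯ A ⪯ I`. Smoothness at `x^k` and the gradient inequality of the convex `f`
give `f(Aw) - f(Ax) ≤ ⟨∇f(x^k), Aw - Ax⟩ + (L_f/2)‖Aw - x^k‖²`; after substituting the gradient,
what is left over is `(1/γ)(⟨Aw - w, Aw - Ax⟩ + ½⟨Mw, w⟩ - ½⟨Mx, x⟩) = -(1/2γ)⟨M(w - x), w - x⟩`,
which is `≤ 0`. The recursion gives `θ_k (x̂^{k+1} - x̂^k) = u^{k+1} - x^k` and
`y^{k+1} - ŷ^k = (τ/θ_k) B (x̂^{k+1} - x̂^k)`, so the `θ_k/γ` term of the claim equals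
`(1/γ)⟨u^{k+1} - x^k, ·⟩ - ⟨y^{k+1} - ŷ^k, ·⟩`, and the dual terms cancel.
-/

/-- Frobenius inner product on real m×d matrices. -/
noncomputable def ip {m d : ℕ} (x y : Matrix (Fin m) (Fin d) ℝ) : ℝ :=
  ∑ i, ∑ j, x i j * y i j

/-- The orthogonal complement C^⊥ = {y : 1ₘᵀ y = 0}. -/
def cPerp (m d : ℕ) : Set (Matrix (Fin m) (Fin d) ℝ) :=
  {y | ∀ j, ∑ i, y i j = 0}

/-- The Lagrangian Φ(x, y) = f(x) + ⟨y, x⟩. -/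
noncomputable def lagr {m d : ℕ} (f : Matrix (Fin m) (Fin d) ℝ → ℝ)
    (x y : Matrix (Fin m) (Fin d) ℝ) : ℝ :=
  f x + ip y x

open Matrix

theorem ConvexOn.add_le_of_hasLineDerivAt {E : Type*} [AddCommGroup E] [Module ℝ E]
    {f : E → ℝ} (hf : ConvexOn ℝ Set.univ f) {x v : E} {f' : ℝ}
    (hf' : HasLineDerivAt ℝ f f' x v) : f x + f' ≤ f (x + v) := by
  have hline : ConvexOn ℝ Set.univ (fun t : ℝ => f (x + t • v)) := by
    have hcomp : (fun t : ℝ => f (x + t • v)) = f ∘ AffineMap.lineMap x (x + v) := by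
      ext t
      simp [AffineMap.lineMap_apply_module', add_comm]
    rw [hcomp]
    exact hf.comp_affineMap _
  have hslope := hline.le_slope_of_hasDerivAt (Set.mem_univ 0) (Set.mem_univ 1) one_pos hf'
  simp only [slope_def_field, one_smul, zero_smul, add_zero, sub_zero, div_one] at hslope
  linarith

variable {m d : ℕ}

theorem ip_eq_trace (a b : Matrix (Fin m) (Fin d) ℝ) : ip a b = (aᵀ * b).trace := by
  simp only [ip, trace, diag, mul_apply, transpose_apply]
  exact Finset.sum_comm

theorem ip_comm (a b : Matrix (Fin m) (Fin d) ℝ) : ip a b = ip b a := by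
  rw [ip_eq_trace, ip_eq_trace, ← trace_transpose, transpose_mul, transpose_transpose]

theorem ip_neg_left (a b : Matrix (Fin m) (Fin d) ℝ) : ip (-a) b = -ip a b := by
  simp only [ip_eq_trace, transpose_neg, Matrix.neg_mul, trace_neg]

theorem ip_sub_left (a b c : Matrix (Fin m) (Fin d) ℝ) : ip (a - b) c = ip a c - ip b c := by
  simp only [ip_eq_trace, transpose_sub, Matrix.sub_mul, trace_sub]

theorem ip_sub_right (a b c : Matrix (Fin m) (Fin d) ℝ) : ip a (b - c) = ip a b - ip a c := by
  simp only [ip_eq_trace, Matrix.mul_sub, trace_sub]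

theorem ip_smul_left (r : ℝ) (a b : Matrix (Fin m) (Fin d) ℝ) : ip (r • a) b = r * ip a b := by
  simp only [ip_eq_trace, transpose_smul, Matrix.smul_mul, trace_smul, smul_eq_mul]

theorem ip_mul_left_of_isSymm {M : Matrix (Fin m) (Fin m) ℝ} (hM : M.IsSymm)
    (a b : Matrix (Fin m) (Fin d) ℝ) : ip (M * a) b = ip a (M * b) := by
  simp only [ip_eq_trace, transpose_mul, hM.eq, Matrix.mul_assoc]

theorem Matrix.PosSemidef.ip_mul_self_nonneg {M : Matrix (Fin m) (Fin m) ℝ} (hM : M.PosSemidef)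
    (a : Matrix (Fin m) (Fin d) ℝ) : 0 ≤ ip (M * a) a := by
  rw [ip_comm, ip_eq_trace, ← conjTranspose_eq_transpose_of_trivial, ← Matrix.mul_assoc]
  exact (hM.conjTranspose_mul_mul_same a).trace_nonneg

-- `A - A² = Aᵀ (1 - A) A + (1 - A)ᵀ A (1 - A)`.
theorem Matrix.PosSemidef.sub_mul_self {n : Type*} [Fintype n] [DecidableEq n]
    {A : Matrix n n ℝ} (hA : A.PosSemidef) (hIA : (1 - A).PosSemidef) :
    (A - A * A).PosSemidef := by
  have h := (hIA.conjTranspose_mul_mul_same A).add (hA.conjTranspose_mul_mul_same (1 - A))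
  rw [hA.isHermitian.eq, hIA.isHermitian.eq] at h
  convert h using 1
  noncomm_ring

theorem ip_mul_sub_self_polarization {A : Matrix (Fin m) (Fin m) ℝ} (hA : A.IsSymm)
    (w z : Matrix (Fin m) (Fin d) ℝ) :
    2 * ip (A * w - w) (A * w - A * z) + ip ((A - A * A) * w) w - ip ((A - A * A) * z) z =
      -ip ((A - A * A) * (w - z)) (w - z) := by
  have hM : (A - A * A).IsSymm := by
    simp only [IsSymm, transpose_sub, transpose_mul, hA.eq]
  have hAw : A * (A * w - w) = -((A - A * A) * w) := by
    simp only [Matrix.mul_sub, Matrix.sub_mul, Matrix.mul_assoc, neg_sub]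
  rw [← Matrix.mul_sub, ip_comm, ip_mul_left_of_isSymm hA, ip_comm, hAw]
  simp only [Matrix.mul_sub, ip_sub_left, ip_sub_right, ip_neg_left]
  rw [ip_mul_left_of_isSymm hM z w, ip_comm z]
  ring

theorem fundamental_ineq_of_step {f : Matrix (Fin m) (Fin d) ℝ → ℝ}
    {gf : Matrix (Fin m) (Fin d) ℝ → Matrix (Fin m) (Fin d) ℝ} {L_f : ℝ}
    (hconv : ConvexOn ℝ Set.univ f)
    (hgrad : ∀ x v : Matrix (Fin m) (Fin d) ℝ, HasLineDerivAt ℝ f (ip (gf x) v) x v)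
    (hsmooth : ∀ z w : Matrix (Fin m) (Fin d) ℝ,
      f w ≤ f z + ip (gf z) (w - z) + L_f / 2 * ip (w - z) (w - z))
    {A : Matrix (Fin m) (Fin m) ℝ} (hA : A.IsSymm) (hAA : (A - A * A).PosSemidef)
    {γ : ℝ} (hγ : 0 < γ) {p ŷ w : Matrix (Fin m) (Fin d) ℝ} (hw : w = p - γ • (gf p + ŷ))
    (z : Matrix (Fin m) (Fin d) ℝ) :
    f (A * w) - f (A * z) + 1 / (2 * γ) * ip ((A - A * A) * w) w
        - 1 / (2 * γ) * ip ((A - A * A) * z) z ≤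
      -ip ŷ (A * w - A * z) - 1 / γ * ip (A * w - p) (A * w - A * z)
        + L_f / 2 * ip (A * w - p) (A * w - p) := by
  have hdescent : f (A * w) - f (A * z) ≤
      ip (gf p) (A * w - A * z) + L_f / 2 * ip (A * w - p) (A * w - p) := by
    have hupper := hsmooth p (A * w)
    have hlower := hconv.add_le_of_hasLineDerivAt (hgrad p (A * z - p))
    rw [add_sub_cancel] at hlower
    have hsplit : ip (gf p) (A * w - p) - ip (gf p) (A * z - p) =
        ip (gf p) (A * w - A * z) := by
      rw [← ip_sub_right, sub_sub_sub_cancel_right]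
    linarith
  have hgf : gf p = (1 / γ) • (p - w) - ŷ := by
    rw [hw, sub_sub_cancel, smul_smul, one_div, inv_mul_cancel₀ hγ.ne', one_smul,
      add_sub_cancel_right]
  have hpol := ip_mul_sub_self_polarization hA w z
  have hquad := hAA.ip_mul_self_nonneg (w - z)
  rw [hgf, ip_sub_left, ip_smul_left, ip_sub_left] at hdescent
  rw [ip_sub_left] at hpol
  rw [ip_sub_left (A * w) p]
  linear_combination hdescent + (1 / (2 * γ)) * hpol + (1 / (2 * γ)) * hquad

section Recursion

variable {E : Type*} [AddCommGroup E] [Module ℝ E] {θ : ℕ → ℝ}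

theorem xh_eq_smul_add_smul (hθ1 : θ 1 = 1) {u x xh : ℕ → E} (hxh1 : xh 1 = x 1)
    (hxh : ∀ k ≥ 1, xh (k + 1) = (1 / θ (k + 1)) • x (k + 1) + (1 - 1 / θ (k + 1)) • u (k + 1))
    {k : ℕ} (hk : 1 ≤ k) : xh k = (1 / θ k) • x k + (1 - 1 / θ k) • u k := by
  match k, hk with
  | 1, _ => simp [hθ1, hxh1]
  | j + 2, _ => exact hxh (j + 1) (by omega)

theorem theta_smul_xh_succ_sub_xh (hθ : ∀ k ≥ 1, θ k ≠ 0) (hθ1 : θ 1 = 1) {u x xh : ℕ → E}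
    (hxh1 : xh 1 = x 1)
    (hx : ∀ k ≥ 1, x (k + 1) = u (k + 1) + (θ (k + 1) / θ k - θ (k + 1)) • (u (k + 1) - u k))
    (hxh : ∀ k ≥ 1, xh (k + 1) = (1 / θ (k + 1)) • x (k + 1) + (1 - 1 / θ (k + 1)) • u (k + 1))
    {k : ℕ} (hk : 1 ≤ k) : θ k • (xh (k + 1) - xh k) = u (k + 1) - x k := by
  have hθk := hθ k hk
  have hθk' := hθ (k + 1) (by omega)
  rw [hxh k hk, hx k hk, xh_eq_smul_add_smul hθ1 hxh1 hxh hk]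
  match_scalars <;> field_simp <;> ring

theorem yh_eq_add_smul (hθ : ∀ k ≥ 1, θ k ≠ 0) (hθ1 : θ 1 = 1) {τ : ℝ} {v y yh : ℕ → E}
    (hy1 : y 1 = 0) (hyh1 : yh 1 = τ • v 1)
    (hy : ∀ k ≥ 1, y (k + 1) = y k + (τ / θ k) • v (k + 1))
    (hyh : ∀ k ≥ 1, yh (k + 1) = y (k + 1) + (θ k / θ (k + 1)) • (y (k + 1) - y k))
    {k : ℕ} (hk : 1 ≤ k) : yh k = y k + (τ / θ k) • v k := by
  match k, hk with
  | 1, _ => simp [hθ1, hy1, hyh1]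
  | j + 2, _ =>
    have hθj := hθ (j + 1) (by omega)
    rw [hyh (j + 1) (by omega), hy (j + 1) (by omega), add_sub_cancel_left, smul_smul]
    congr 2
    field_simp

theorem y_succ_sub_yh (hθ : ∀ k ≥ 1, θ k ≠ 0) (hθ1 : θ 1 = 1) {τ : ℝ} {v y yh : ℕ → E}
    (hy1 : y 1 = 0) (hyh1 : yh 1 = τ • v 1)
    (hy : ∀ k ≥ 1, y (k + 1) = y k + (τ / θ k) • v (k + 1))
    (hyh : ∀ k ≥ 1, yh (k + 1) = y (k + 1) + (θ k / θ (k + 1)) • (y (k + 1) - y k))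
    {k : ℕ} (hk : 1 ≤ k) : y (k + 1) - yh k = (τ / θ k) • (v (k + 1) - v k) := by
  rw [hy k hk, yh_eq_add_smul hθ hθ1 hy1 hyh1 hy hyh hk]
  module

end Recursion

theorem stmt_10_general {m d : ℕ} (f : Matrix (Fin m) (Fin d) ℝ → ℝ)
    (gf : Matrix (Fin m) (Fin d) ℝ → Matrix (Fin m) (Fin d) ℝ)
    (L_f : ℝ)
    (hconv : ConvexOn ℝ Set.univ f)
    (hgrad : ∀ x v : Matrix (Fin m) (Fin d) ℝ,
      HasDerivAt (fun t : ℝ => f (x + t • v)) (ip (gf x) v) 0)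
    (hsmooth : ∀ z w : Matrix (Fin m) (Fin d) ℝ,
      f w ≤ f z + ip (gf z) (w - z) + L_f / 2 * ip (w - z) (w - z))
    (A B : Matrix (Fin m) (Fin m) ℝ)
    (hA : A.PosSemidef) (hIA : ((1 : Matrix (Fin m) (Fin m) ℝ) - A).PosSemidef)
    (γ τ : ℝ) (hγ : 0 < γ)
    (θ : ℕ → ℝ) (hθ : ∀ k ≥ 1, 0 < θ k ∧ θ k ≤ 1) (hθ1 : θ 1 = 1)
    (u uh x xh y yh : ℕ → Matrix (Fin m) (Fin d) ℝ)
    (hxh1 : xh 1 = x 1) (hy1 : y 1 = 0)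
    (hyh1 : yh 1 = τ • (B * x 1))
    (huh : ∀ k ≥ 1, uh k = x k - γ • (gf (x k) + yh k))
    (hu : ∀ k ≥ 1, u (k + 1) = A * uh k)
    (hx : ∀ k ≥ 1, x (k + 1) =
      u (k + 1) + (θ (k + 1) / θ k - θ (k + 1)) • (u (k + 1) - u k))
    (hxh : ∀ k ≥ 1, xh (k + 1) =
      (1 / θ (k + 1)) • x (k + 1) + (1 - 1 / θ (k + 1)) • u (k + 1))
    (hy : ∀ k ≥ 1, y (k + 1) = y k + (τ / θ k) • (B * xh (k + 1)))
    (hyh : ∀ k ≥ 1, yh (k + 1) = y (k + 1) + (θ k / θ (k + 1)) • (y (k + 1) - y k)) :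
    ∀ k ≥ 1, ∀ xx : Matrix (Fin m) (Fin d) ℝ, ∀ yy ∈ cPerp m d,
      lagr f (u (k + 1)) yy - lagr f (A * xx) yy
        + (1 / (2 * γ)) * ip ((A - A * A) * uh k) (uh k)
        - (1 / (2 * γ)) * ip ((A - A * A) * xx) xx ≤
      -(ip (y (k + 1) - yy) (u (k + 1) - A * xx))
        - (θ k / γ) *
          ip (((1 : Matrix (Fin m) (Fin m) ℝ) - (γ * τ / θ k ^ 2) • B) *
              (xh (k + 1) - xh k))
            (u (k + 1) - A * xx)
        + L_f / 2 * ip (u (k + 1) - x k) (u (k + 1) - x k) := by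
  intro k hk xx yy _
  have hθ0 : ∀ j ≥ 1, θ j ≠ 0 := fun j hj => (hθ j hj).1.ne'
  have hcorr : θ k • (((1 : Matrix (Fin m) (Fin m) ℝ) - (γ * τ / θ k ^ 2) • B) *
      (xh (k + 1) - xh k)) = (u (k + 1) - x k) - γ • (y (k + 1) - yh k) := by
    rw [y_succ_sub_yh (v := fun j => B * xh j) hθ0 hθ1 hy1 (hxh1 ▸ hyh1) hy hyh hk,
      ← Matrix.mul_sub, Matrix.sub_mul, Matrix.one_mul, Matrix.smul_mul, smul_sub,
      ← theta_smul_xh_succ_sub_xh hθ0 hθ1 hxh1 hx hxh hk, smul_smul, smul_smul]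
    congr 2
    field_simp
  have hstep := fundamental_ineq_of_step hconv hgrad hsmooth
    (isHermitian_iff_isSymm.mp hA.isHermitian) (hA.sub_mul_self hIA) hγ (huh k hk) xx
  rw [← hu k hk] at hstep
  have hscale : ∀ v, θ k / γ * ip (((1 : Matrix (Fin m) (Fin m) ℝ) - (γ * τ / θ k ^ 2) • B) *
      (xh (k + 1) - xh k)) v = 1 / γ * ip (u (k + 1) - x k) v - ip (y (k + 1) - yh k) v := by
    intro v
    rw [show θ k / γ = 1 / γ * θ k by ring, mul_assoc, ← ip_smul_left, hcorr, ip_sub_left,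
      ip_smul_left]
    field_simp
  rw [hscale]
  simp only [lagr, ip_sub_left, ip_sub_right] at hstep ⊢
  linarith

/-- STATEMENT 10 (Fundamental Inequality I) for the accelerated primal-dual
recursion: for every k ≥ 1, x ∈ ℝ^{m×d} and y ∈ C^⊥,
Φ(u^{k+1}, y) − Φ(Ax, y) + h(u^{k+1/2}) − h(x)
  ≤ −⟨y^{k+1} − y, u^{k+1} − Ax⟩
    − (θ_k/γ)⟨(I − (γτ/θ_k²)B)(x̂^{k+1} − x̂^k), u^{k+1} − Ax⟩
    + (L_f/2)‖u^{k+1} − x^k‖²,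
where h(z) = (1/(2γ))⟨(A − A²)z, z⟩. -/
theorem stmt_10 {m d : ℕ} (f : Matrix (Fin m) (Fin d) ℝ → ℝ)
    (gf : Matrix (Fin m) (Fin d) ℝ → Matrix (Fin m) (Fin d) ℝ)
    (L_f : ℝ) (hLf : 0 < L_f)
    (hconv : ConvexOn ℝ Set.univ f)
    (hgrad : ∀ x v : Matrix (Fin m) (Fin d) ℝ,
      HasDerivAt (fun t : ℝ => f (x + t • v)) (ip (gf x) v) 0)
    (hsmooth : ∀ z w : Matrix (Fin m) (Fin d) ℝ,
      f w ≤ f z + ip (gf z) (w - z) + L_f / 2 * ip (w - z) (w - z))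
    (A B : Matrix (Fin m) (Fin m) ℝ)
    (hA : A.PosSemidef) (hIA : ((1 : Matrix (Fin m) (Fin m) ℝ) - A).PosSemidef)
    (hA1 : ((1 : Matrix (Fin m) (Fin m) ℝ) - A).mulVec (fun _ => (1 : ℝ)) = 0)
    (hB : B.PosSemidef) (hB1 : B.mulVec (fun _ => (1 : ℝ)) = 0)
    (γ τ : ℝ) (hγ : 0 < γ) (hτ : 0 < τ)
    (θ : ℕ → ℝ) (hθ : ∀ k ≥ 1, 0 < θ k ∧ θ k ≤ 1) (hθ1 : θ 1 = 1)
    (u uh x xh y yh : ℕ → Matrix (Fin m) (Fin d) ℝ)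
    (hu1 : u 1 = x 1) (hxh1 : xh 1 = x 1) (hy1 : y 1 = 0)
    (hyh1 : yh 1 = τ • (B * x 1))
    (huh : ∀ k ≥ 1, uh k = x k - γ • (gf (x k) + yh k))
    (hu : ∀ k ≥ 1, u (k + 1) = A * uh k)
    (hx : ∀ k ≥ 1, x (k + 1) =
      u (k + 1) + (θ (k + 1) / θ k - θ (k + 1)) • (u (k + 1) - u k))
    (hxh : ∀ k ≥ 1, xh (k + 1) =
      (1 / θ (k + 1)) • x (k + 1) + (1 - 1 / θ (k + 1)) • u (k + 1))
    (hy : ∀ k ≥ 1, y (k + 1) = y k + (τ / θ k) • (B * xh (k + 1)))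
    (hyh : ∀ k ≥ 1, yh (k + 1) = y (k + 1) + (θ k / θ (k + 1)) • (y (k + 1) - y k)) :
    ∀ k ≥ 1, ∀ xx : Matrix (Fin m) (Fin d) ℝ, ∀ yy ∈ cPerp m d,
      lagr f (u (k + 1)) yy - lagr f (A * xx) yy
        + (1 / (2 * γ)) * ip ((A - A * A) * uh k) (uh k)
        - (1 / (2 * γ)) * ip ((A - A * A) * xx) xx ≤
      -(ip (y (k + 1) - yy) (u (k + 1) - A * xx))
        - (θ k / γ) *
          ip (((1 : Matrix (Fin m) (Fin m) ℝ) - (γ * τ / θ k ^ 2) • B) *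
              (xh (k + 1) - xh k))
            (u (k + 1) - A * xx)
        + L_f / 2 * ip (u (k + 1) - x k) (u (k + 1) - x k) :=
  stmt_10_general f gf L_f hconv hgrad hsmooth A B hA hIA γ τ hγ θ hθ hθ1 u uh x xh y yh hxh1 hy1
    hyh1 huh hu hx hxh hy hyh
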